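/- Let C be a simplicial complex on [n] and let d, d' ∈ ℤ^n satisfy 2 ≤ d'_i ≤ d_i for all i. If the design matrix A_{C,d} is unimodular, then A_{C,d'} is unimodular. -/

import Mathlib

open Finset

/-- A (finite) simplicial complex on ground set `V`: a collection of finite subsets of `V`
closed under taking subsets.  (The empty collection, the void complex, is allowed.) -/
structure SComplex (V : Type) where
  faces : Finset (Finset V)
  down_closed : ∀ s ∈ faces, ∀ t ⊆ s, t ∈ faces

/-- An integer matrix, viewed over `ℚ`, has a rank. -/
noncomputable def intRank {m n : Type} [Fintype n] (A : Matrix m n ℤ) : ℕ :=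
  (A.map ((↑·) : ℤ → ℚ)).rank

/-- An integer matrix `A` of rank `d` is unimodular if there is a nonzero `λ` such that
every `d × d` minor of `A` equals `0`, `λ` or `-λ`. -/
def IntUnimodular {m n : Type} [Fintype m] [Fintype n] (A : Matrix m n ℤ) : Prop :=
  ∃ lam : ℤ, lam ≠ 0 ∧ ∀ (r : Fin (intRank A) → m) (c : Fin (intRank A) → n),
    (A.submatrix r c).det = 0 ∨ (A.submatrix r c).det = lam ∨ (A.submatrix r c).det = -lam

/-- A real matrix `A` of rank `d` is unimodular if there is a nonzero `λ` such that
every `d × d` minor of `A` equals `0`, `λ` or `-λ`. -/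
def RealUnimodular {m n : Type} [Fintype m] [Fintype n] (A : Matrix m n ℝ) : Prop :=
  ∃ lam : ℝ, lam ≠ 0 ∧ ∀ (r : Fin A.rank → m) (c : Fin A.rank → n),
    (A.submatrix r c).det = 0 ∨ (A.submatrix r c).det = lam ∨ (A.submatrix r c).det = -lam

namespace SComplex

variable {V W : Type}

/-- The facets of a simplicial complex: its inclusion-maximal faces. -/
def facets [DecidableEq V] (C : SComplex V) : Finset (Finset V) :=
  C.faces.filter fun F => ∀ G ∈ C.faces, F ⊆ G → F = G

/-- The design matrix `A_{C,d}` of the hierarchical model given by the complex `C` and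
the table dimension vector `d`.  Columns are indexed by tuples `i ∈ ∏ v, [d v]`, rows by
pairs `(F, j)` with `F` a facet and `j ∈ ∏_{v ∈ F} [d v]`; the entry is `1` iff the
restriction of `i` to `F` is `j`. -/
def designMatrixD [DecidableEq V] (C : SComplex V) (d : V → ℕ) :
    Matrix ((F : {F // F ∈ C.facets}) × ((v : {v // v ∈ F.1}) → Fin (d v.1)))
      ((v : V) → Fin (d v)) ℤ :=
  fun r i => if ∀ v : {v // v ∈ r.1.1}, i v.1 = r.2 v then 1 else 0

/-- The binary design matrix `A_C = A_{C,2}`. -/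
def designMatrix [DecidableEq V] (C : SComplex V) := designMatrixD C fun _ => 2

/-- A simplicial complex is unimodular if its binary design matrix is unimodular. -/
def IsUnimodular [DecidableEq V] [Fintype V] (C : SComplex V) : Prop :=
  IntUnimodular (designMatrix C)

/-- The Alexander dual `C* = {S : Sᶜ ∉ C}`. -/
def dual [DecidableEq V] [Fintype V] (C : SComplex V) : SComplex V where
  faces := univ.filter fun s => sᶜ ∉ C.faces
  down_closed := by
    intro s hs t ht
    simp only [mem_filter, mem_univ, true_and] at hs ⊢
    intro h
    exact hs (C.down_closed _ h _ (compl_subset_compl.mpr ht))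

/-- The induced subcomplex of `C` on a vertex subset `A`. -/
def induce [DecidableEq V] (C : SComplex V) (A : Finset V) :
    SComplex {v // v ∈ A} where
  faces := univ.filter fun s => s.map (Function.Embedding.subtype fun v => v ∈ A) ∈ C.faces
  down_closed := by
    intro s hs t ht
    simp only [mem_filter, mem_univ, true_and] at hs ⊢
    exact C.down_closed _ hs _ (map_subset_map.mpr ht)

/-- The link of a set `S` in `C`, as a complex on the ground set `Sᶜ`:
`link_S(C) = {F \ S : F ∈ C, S ⊆ F}`. -/
def link [DecidableEq V] [Fintype V] (C : SComplex V) (S : Finset V) :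
    SComplex {v // v ∈ Sᶜ} where
  faces := univ.filter fun s =>
    s.map (Function.Embedding.subtype fun v => v ∈ Sᶜ) ∪ S ∈ C.faces
  down_closed := by
    intro s hs t ht
    simp only [mem_filter, mem_univ, true_and] at hs ⊢
    exact C.down_closed _ hs _ (union_subset_union_left (map_subset_map.mpr ht))

/-- The minor `link_R(C \ S)` of `C`, a complex on the ground set `(R ∪ S)ᶜ`. -/
def minorAt [DecidableEq V] [Fintype V] (C : SComplex V) (R S : Finset V) :
    SComplex {v // v ∈ (R ∪ S)ᶜ} where
  faces := univ.filter fun s =>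
    s.map (Function.Embedding.subtype fun v => v ∈ (R ∪ S)ᶜ) ∪ R ∈ C.faces
  down_closed := by
    intro s hs t ht
    simp only [mem_filter, mem_univ, true_and] at hs ⊢
    exact C.down_closed _ hs _ (union_subset_union_left (map_subset_map.mpr ht))

/-- Isomorphism of simplicial complexes: a bijection of ground sets carrying faces to faces. -/
def Isomorphic [DecidableEq W] (C : SComplex V) (D : SComplex W) : Prop :=
  ∃ e : V ≃ W, ∀ s : Finset V, s ∈ C.faces ↔ s.image (⇑e) ∈ D.faces

/-- `D` is a minor of `C` if `D` is isomorphic to `link_R(C \ S)` for some face `R` of `C`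
and vertex set `S` disjoint from `R`. -/
def IsMinor [DecidableEq V] [Fintype V] [DecidableEq W] (D : SComplex W) (C : SComplex V) :
    Prop :=
  ∃ R S : Finset V, Disjoint R S ∧ R ∈ C.faces ∧ D.Isomorphic (C.minorAt R S)

/-- The simplicial complex generated by a given collection of sets. -/
def gen [DecidableEq V] [Fintype V] (gens : Finset (Finset V)) : SComplex V where
  faces := univ.filter fun s => ∃ g ∈ gens, s ⊆ g
  down_closed := by
    intro s hs t ht
    simp only [mem_filter, mem_univ, true_and] at hs ⊢
    obtain ⟨g, hg, hsg⟩ := hs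
    exact ⟨g, hg, ht.trans hsg⟩

/-- The cone over `C`: one new vertex (the last one) is added to every face. -/
def cone {n : ℕ} (C : SComplex (Fin n)) : SComplex (Fin (n + 1)) where
  faces := univ.filter fun s => (univ.filter fun v : Fin n => v.castSucc ∈ s) ∈ C.faces
  down_closed := by
    intro s hs t ht
    simp only [mem_filter, mem_univ, true_and] at hs ⊢
    refine C.down_closed _ hs _ ?_
    intro v hv
    simp only [mem_filter, mem_univ, true_and] at hv ⊢
    exact ht hv

/-- Adding one ghost vertex (the last one) to `C`. -/
def ghost {n : ℕ} (C : SComplex (Fin n)) : SComplex (Fin (n + 1)) where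
  faces := univ.filter fun s => Fin.last n ∉ s ∧
    (univ.filter fun v : Fin n => v.castSucc ∈ s) ∈ C.faces
  down_closed := by
    intro s hs t ht
    simp only [mem_filter, mem_univ, true_and] at hs ⊢
    refine ⟨fun h => hs.1 (ht h), C.down_closed _ hs.2 _ ?_⟩
    intro v hv
    simp only [mem_filter, mem_univ, true_and] at hv ⊢
    exact ht hv

/-- The iterated cone `cone^p(C)`. -/
def conePow {n : ℕ} : (p : ℕ) → SComplex (Fin n) → SComplex (Fin (n + p))
  | 0, C => C
  | p + 1, C => cone (conePow p C)

/-- Adding `p` ghost vertices `G^p(C)`. -/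
def ghostPow {n : ℕ} : (p : ℕ) → SComplex (Fin n) → SComplex (Fin (n + p))
  | 0, C => C
  | p + 1, C => ghost (ghostPow p C)

/-- The embedding `Fin n ↪ Fin (n+1)` by `castSucc`. -/
def castSuccEmb' {n : ℕ} : Fin n ↪ Fin (n + 1) :=
  ⟨Fin.castSucc, Fin.castSucc_injective n⟩

/-- The Lawrence lifting `Λ(C)`: its facets are the old ground set `[n]` (a big facet)
together with `F ∪ {n+1}` for each facet `F` of `C`. -/
def lawrence {n : ℕ} (C : SComplex (Fin n)) : SComplex (Fin (n + 1)) :=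
  gen (insert ((univ : Finset (Fin n)).map castSuccEmb')
    (C.facets.image fun F => insert (Fin.last n) (F.map castSuccEmb')))

/-- The disjoint union `Δ_m ⊔ Δ_k` of an `m`-simplex (on the first `m+1` vertices) and
a `k`-simplex (on the remaining `k+1` vertices). -/
def disjSimplices (m k : ℕ) : SComplex (Fin (m + k + 2)) :=
  gen {univ.filter fun x : Fin (m + k + 2) => (x : ℕ) ≤ m,
    univ.filter fun x : Fin (m + k + 2) => m < (x : ℕ)}

/-- The full simplex on `k` vertices (i.e. `Δ_{k-1}`; for `k = 0` this is `Δ_{-1} = {∅}`). -/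
def fullSimplexC (k : ℕ) : SComplex (Fin k) where
  faces := univ
  down_closed := fun _ _ t _ => mem_univ t

/-- The void complex `Δ_{-2} = {}`. -/
def voidC : SComplex (Fin 0) where
  faces := ∅
  down_closed := by simp

/-- `∂Δ_k ⊔ {v}`: the boundary of a `k`-simplex together with one extra disjoint vertex. -/
def bdyDisjPt (k : ℕ) : SComplex (Fin (k + 2)) where
  faces := univ.filter fun s =>
    s ⊂ (univ.filter fun x : Fin (k + 2) => (x : ℕ) < k + 1) ∨ s = {Fin.last (k + 1)}
  down_closed := by
    intro s hs t ht
    simp only [mem_filter, mem_univ, true_and] at hs ⊢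
    rcases hs with hs | rfl
    · exact Or.inl (lt_of_le_of_lt ht hs)
    · rcases Finset.subset_singleton_iff.mp ht with rfl | rfl
      · refine Or.inl (Finset.empty_ssubset.mpr ⟨⟨0, by omega⟩, ?_⟩)
        simp
      · exact Or.inr rfl

/-- The path `P_4` on four vertices. -/
def P4 : SComplex (Fin 4) := gen {{0, 1}, {1, 2}, {2, 3}}

/-- The four-cycle `C_4`. -/
def C4 : SComplex (Fin 4) := gen {{0, 1}, {1, 2}, {2, 3}, {0, 3}}

/-- The boundary of the octahedron, with antipodal vertex pairs `(0,3)`, `(1,4)`, `(2,5)`. -/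
def O6 : SComplex (Fin 6) :=
  gen {{0, 1, 2}, {0, 1, 5}, {0, 4, 2}, {0, 4, 5}, {3, 1, 2}, {3, 1, 5}, {3, 4, 2}, {3, 4, 5}}

/-- The complex `J_1` on five vertices with facets `12, 15, 234, 345`. -/
def J1 : SComplex (Fin 5) := gen {{0, 1}, {0, 4}, {1, 2, 3}, {2, 3, 4}}

/-- The complex `J_2` on five vertices with facets `12, 235, 34, 145`. -/
def J2 : SComplex (Fin 5) := gen {{0, 1}, {1, 2, 4}, {2, 3}, {0, 3, 4}}

/-- The nuclear complexes (on `Fin` ground sets), built from disjoint unions of two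
simplices, duals thereof, and simplices, by repeatedly coning, adding ghost vertices
and taking Lawrence liftings. -/
inductive Nuclear : {n : ℕ} → SComplex (Fin n) → Prop
  | lawrence {n : ℕ} {D : SComplex (Fin n)} : Nuclear D → Nuclear D.lawrence
  | ghost {n : ℕ} {D : SComplex (Fin n)} : Nuclear D → Nuclear D.ghost
  | coneDisj (p m k : ℕ) : Nuclear (conePow p (disjSimplices m k))
  | coneDualDisj (p m k : ℕ) : Nuclear (conePow p (dual (disjSimplices (m + 1) (k + 1))))
  | simplex (k : ℕ) : Nuclear (fullSimplexC k)
  | void : Nuclear voidC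

/-- A complex on an arbitrary ground set is nuclear if it is isomorphic to a nuclear
complex on a `Fin` ground set. -/
def IsNuclear (C : SComplex V) : Prop :=
  ∃ (k : ℕ) (D : SComplex (Fin k)), Nuclear D ∧ C.Isomorphic D

/-- `C` is β-avoiding if no minor of `C` is isomorphic to `P_4`, `O_6`, `O_6*`, `J_1`,
`J_1*`, `J_2`, or `∂Δ_k ⊔ {v}` for some `k ≥ 1`. -/
def BetaAvoiding [DecidableEq V] [Fintype V] (C : SComplex V) : Prop :=
  ¬ IsMinor P4 C ∧ ¬ IsMinor O6 C ∧ ¬ IsMinor (dual O6) C ∧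
  ¬ IsMinor J1 C ∧ ¬ IsMinor (dual J1) C ∧ ¬ IsMinor J2 C ∧
  ∀ k : ℕ, 1 ≤ k → ¬ IsMinor (bdyDisjPt k) C

/-- The 1-skeleton of a complex, as a simple graph. -/
def oneSkeleton [DecidableEq V] (C : SComplex V) : SimpleGraph V where
  Adj u v := u ≠ v ∧ ({u, v} : Finset V) ∈ C.faces
  symm := by
    constructor
    intro u v h
    exact ⟨h.1.symm, by rw [Finset.pair_comm]; exact h.2⟩
  loopless := by
    constructor
    intro u h
    exact h.1 rfl

/-- The non-ghost vertices of `C`: those `v` with `{v}` a face. -/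
def nonGhost [DecidableEq V] [Fintype V] (C : SComplex V) : Finset V :=
  univ.filter fun v => ({v} : Finset V) ∈ C.faces

/-- `S` is a minimal nonface of `C`: not a face, but all proper subsets are faces. -/
def MinNonface (C : SComplex V) (S : Finset V) : Prop :=
  S ∉ C.faces ∧ ∀ t ⊂ S, t ∈ C.faces

end SComplex

/-!
Write tuples `i ∈ ∏ v, [d v]` with entries `0, …, d v - 1` and call `{v | i v ≠ 0}` their
support. The rank of `A_{C,d}` is the number of tuples supported on a face of `C`. The row
space is spanned by the indicators of `{i | i = p on supp p}` for such `p`: expand every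
factor `[i a = 0]` of a row as `1 - ∑_{0 < m < d a} [i a = m]`. Conversely, matching each such
`p` with the row "restriction to a facet containing `supp p` equals `p`" gives a square
submatrix which is unitriangular once the tuples are sorted by the size of their support.

`A_{C,d'}` is the submatrix of `A_{C,d}` on entries `< d'`. The face-supported tuples with
some entry `p v ≥ d' v` give a unitriangular block whose rows vanish on all columns of
`A_{C,d'}`; by the rank formula, adjoining this block turns every maximal minor of `A_{C,d'}`
into a maximal minor of `A_{C,d}` with the same determinant.
-/

open Matrix Module Submodule

theorem card_le_intRank_of_det_submatrix_ne_zero {m n ι : Type} [Fintype n] [Fintype ι]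
    [DecidableEq ι] (A : Matrix m n ℤ) (r : ι → m) (c : ι → n)
    (h : (A.submatrix r c).det ≠ 0) : Fintype.card ι ≤ intRank A := by
  have hunit : IsUnit ((A.map ((↑·) : ℤ → ℚ)).submatrix r c) := by
    rw [isUnit_iff_isUnit_det, submatrix_map, ← Int.cast_det]
    exact isUnit_iff_ne_zero.mpr (by exact_mod_cast h)
  rw [← rank_of_isUnit _ hunit]
  exact rank_submatrix_le _ _ _

theorem IntUnimodular.submatrix_of_complement {m n m' n' ι : Type} [Fintype m] [Fintype n]
    [Fintype m'] [Fintype n'] [Fintype ι] [DecidableEq ι] {A : Matrix m n ℤ}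
    (hA : IntUnimodular A) (f : m' → m) (g : n' → n) (R : ι → m) (K : ι → n)
    (hdet : (A.submatrix R K).det = 1) (hzero : ∀ x j, A (R x) (g j) = 0)
    (hrank : intRank A = intRank (A.submatrix f g) + Fintype.card ι) :
    IntUnimodular (A.submatrix f g) := by
  obtain ⟨lam, hlam, hminor⟩ := hA
  refine ⟨lam, hlam, fun r c => ?_⟩
  let e : Fin (intRank A) ≃ Fin (intRank (A.submatrix f g)) ⊕ ι :=
    (finCongr hrank).trans <| finSumFinEquiv.symm.trans <|
      Equiv.sumCongr (Equiv.refl _) (Fintype.equivFin ι).symm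
  have hblocks : A.submatrix (Sum.elim (f ∘ r) R) (Sum.elim (g ∘ c) K) =
      fromBlocks ((A.submatrix f g).submatrix r c) (A.submatrix (f ∘ r) K) 0
        (A.submatrix R K) := by
    ext (x | x) (y | y) <;> simp [hzero]
  have hdet_eq : (A.submatrix (Sum.elim (f ∘ r) R ∘ e) (Sum.elim (g ∘ c) K ∘ e)).det =
      ((A.submatrix f g).submatrix r c).det := by
    rw [← submatrix_submatrix, det_submatrix_equiv_self, hblocks, det_fromBlocks_zero₂₁, hdet,
      mul_one]
  rw [← hdet_eq]
  exact hminor _ _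

section Tuples

variable {V : Type} {d d' : V → ℕ}

def tupleCastLE (h : ∀ v, d' v ≤ d v) (i : (v : V) → Fin (d' v)) : (v : V) → Fin (d v) :=
  fun v => Fin.castLE (h v) (i v)

def cylinder (d : V → ℕ) (S : Finset V) (k : V → ℕ) : ((v : V) → Fin (d v)) → ℚ :=
  fun i => ∏ v ∈ S, if (i v : ℕ) = k v then 1 else 0

theorem cylinder_eq_sub_sum [DecidableEq V] {S : Finset V} {k : V → ℕ} {a : V} (ha : a ∈ S)
    (hka : k a = 0) :
    cylinder d S k = cylinder d (S.erase a) k -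
      ∑ m ∈ Ioo 0 (d a), cylinder d S (Function.update k a m) := by
  funext i
  have hsplit : ∀ m, cylinder d S (Function.update k a m) i =
      (if (i a : ℕ) = m then 1 else 0) * cylinder d (S.erase a) k i := fun m => by
    rw [cylinder, ← mul_prod_erase S _ ha, Function.update_self]
    congr 1
    exact prod_congr rfl fun v hv => by rw [Function.update_of_ne (ne_of_mem_erase hv)]
  simp only [Pi.sub_apply, Finset.sum_apply, hsplit, ← sum_mul, sum_ite_eq, mem_Ioo]
  rw [cylinder, ← mul_prod_erase S _ ha, hka, ← cylinder]
  have hlt := (i a).isLt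
  by_cases h0 : (i a : ℕ) = 0 <;> simp [h0, Nat.pos_of_ne_zero, hlt]

variable [Fintype V]

def tupleSupport (i : (v : V) → Fin (d v)) : Finset V :=
  univ.filter fun v => (i v : ℕ) ≠ 0

theorem tupleSupport_tupleCastLE (h : ∀ v, d' v ≤ d v) (i : (v : V) → Fin (d' v)) :
    tupleSupport (tupleCastLE h i) = tupleSupport i := by
  ext v
  rw [tupleSupport, tupleSupport, mem_filter, mem_filter]
  simp [tupleCastLE]

theorem tupleSupport_subset_of_eqOn {p q : (v : V) → Fin (d v)}
    (h : ∀ v ∈ tupleSupport p, q v = p v) : tupleSupport p ⊆ tupleSupport q := by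
  intro v hv
  simpa [tupleSupport, h v hv] using hv

theorem eq_of_eqOn_tupleSupport {p q : (v : V) → Fin (d v)}
    (h : ∀ v ∈ tupleSupport p, q v = p v) (hcard : #(tupleSupport q) ≤ #(tupleSupport p)) :
    q = p := by
  have hsupp := eq_of_subset_of_card_le (tupleSupport_subset_of_eqOn h) hcard
  funext v
  by_cases hv : v ∈ tupleSupport p
  · exact h v hv
  · have hv' : v ∉ tupleSupport q := hsupp ▸ hv
    simp only [tupleSupport, mem_filter, mem_univ, true_and, not_not] at hv hv'
    exact Fin.ext (hv'.trans hv.symm)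

end Tuples

namespace SComplex

variable {V : Type} [DecidableEq V] {d d' : V → ℕ}

theorem facets_subset_faces (C : SComplex V) : C.facets ⊆ C.faces :=
  filter_subset _ _

theorem exists_facet_superset (C : SComplex V) {G : Finset V} (hG : G ∈ C.faces) :
    ∃ F ∈ C.facets, G ⊆ F := by
  obtain ⟨F, hGF, hmax⟩ := C.faces.exists_le_maximal hG
  exact ⟨F, mem_filter.mpr ⟨hmax.1, fun H hH hFH => le_antisymm hFH (hmax.2 hH hFH)⟩, hGF⟩

abbrev DesignRow (C : SComplex V) (d : V → ℕ) :=
  (F : {F // F ∈ C.facets}) × ((v : {v // v ∈ F.1}) → Fin (d v.1))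

def DesignRow.castLE (h : ∀ v, d' v ≤ d v) {C : SComplex V} (r : C.DesignRow d') :
    C.DesignRow d :=
  ⟨r.1, fun v => Fin.castLE (h v.1) (r.2 v)⟩

theorem designMatrixD_submatrix_castLE (C : SComplex V) (h : ∀ v, d' v ≤ d v) :
    (C.designMatrixD d).submatrix (DesignRow.castLE h) (tupleCastLE h) = C.designMatrixD d' := by
  ext r i
  simp [designMatrixD, DesignRow.castLE, tupleCastLE, Fin.castLE_inj]

theorem designMatrixD_map_row (C : SComplex V) (r : C.DesignRow d) :
    (C.designMatrixD d).map ((↑·) : ℤ → ℚ) r =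
      cylinder d r.1.1 (fun v => if h : v ∈ r.1.1 then r.2 ⟨v, h⟩ else 0) := by
  funext i
  rw [map_apply, cylinder, prod_boole, designMatrixD]
  by_cases h : ∀ v : {v // v ∈ r.1.1}, i v = r.2 v
  · rw [if_pos h, if_pos fun v hv => by simp [hv, h ⟨v, hv⟩], Int.cast_one]
  · rw [if_neg h, if_neg fun h' => h fun v => Fin.ext (by simpa [v.2] using h' v v.2),
      Int.cast_zero]

variable [Fintype V]

abbrev FaceTuples (C : SComplex V) (d : V → ℕ) :=
  {i : (v : V) → Fin (d v) // tupleSupport i ∈ C.faces}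

noncomputable def tupleRow (C : SComplex V) (p : C.FaceTuples d) : C.DesignRow d :=
  ⟨⟨(C.exists_facet_superset p.2).choose, (C.exists_facet_superset p.2).choose_spec.1⟩,
    fun v => p.1 v⟩

theorem tupleSupport_subset_tupleRow (C : SComplex V) (p : C.FaceTuples d) :
    tupleSupport p.1 ⊆ (C.tupleRow p).1.1 :=
  (C.exists_facet_superset p.2).choose_spec.2

theorem designMatrixD_tupleRow_self (C : SComplex V) (p : C.FaceTuples d) :
    C.designMatrixD d (C.tupleRow p) p.1 = 1 := by
  simp [designMatrixD, tupleRow]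

theorem eqOn_of_designMatrixD_tupleRow_ne_zero (C : SComplex V) {p : C.FaceTuples d}
    {q : (v : V) → Fin (d v)} (h : C.designMatrixD d (C.tupleRow p) q ≠ 0) :
    ∀ v ∈ tupleSupport p.1, q v = p.1 v :=
  fun v hv => (ite_ne_right_iff.mp h).1 ⟨v, C.tupleSupport_subset_tupleRow p hv⟩

theorem det_designMatrixD_submatrix_tupleRow (C : SComplex V) {ι : Type} [Fintype ι]
    [DecidableEq ι] (f : ι → C.FaceTuples d) (hf : Function.Injective f) :
    ((C.designMatrixD d).submatrix (C.tupleRow ∘ f) (Subtype.val ∘ f)).det = 1 := by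
  set M := (C.designMatrixD d).submatrix (C.tupleRow ∘ f) (Subtype.val ∘ f)
  let b : ι → ℕ := fun x => #(tupleSupport (f x).1)
  have hM : M.BlockTriangular b := fun x y hlt => by
    by_contra h
    exact hlt.not_ge (card_le_card (tupleSupport_subset_of_eqOn
      (C.eqOn_of_designMatrixD_tupleRow_ne_zero h)))
  have hblock : ∀ k, M.toSquareBlock b k = 1 := fun k => by
    ext ⟨x, hx⟩ ⟨y, hy⟩
    by_cases hxy : x = y
    · subst hxy
      simp [M, toSquareBlock_def, designMatrixD_tupleRow_self]
    · simp only [toSquareBlock_def, one_apply, Subtype.mk.injEq, hxy, if_false]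
      by_contra h
      exact hxy (hf (Subtype.ext (eq_of_eqOn_tupleSupport
        (C.eqOn_of_designMatrixD_tupleRow_ne_zero h) (hy.trans hx.symm).le)).symm)
  rw [hM.det]
  simp [hblock]

theorem card_faceTuples_le_intRank (C : SComplex V) :
    Fintype.card (C.FaceTuples d) ≤ intRank (C.designMatrixD d) :=
  card_le_intRank_of_det_submatrix_ne_zero _ _ _
    (by rw [C.det_designMatrixD_submatrix_tupleRow id Function.injective_id]; exact one_ne_zero)

def faceCylinder (C : SComplex V) (d : V → ℕ) (p : C.FaceTuples d) :
    ((v : V) → Fin (d v)) → ℚ :=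
  cylinder d (tupleSupport p.1) (fun v => p.1 v)

theorem exists_faceCylinder_eq_cylinder (C : SComplex V) (i₀ : (v : V) → Fin (d v))
    {S : Finset V} {k : V → ℕ} (hS : S ∈ C.faces) (hk : ∀ v ∈ S, k v < d v)
    (hk0 : ∀ v ∈ S, k v ≠ 0) : ∃ p, C.faceCylinder d p = cylinder d S k := by
  let p : (v : V) → Fin (d v) := fun v =>
    if h : v ∈ S then ⟨k v, hk v h⟩ else ⟨0, (i₀ v).pos⟩
  have hp : tupleSupport p = S := by
    ext v
    by_cases h : v ∈ S <;> simp [tupleSupport, p, h, hk0]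
  refine ⟨⟨p, hp ▸ hS⟩, ?_⟩
  change cylinder d (tupleSupport p) (fun v => p v) = _
  rw [hp]
  funext i
  exact prod_congr rfl fun v hv => by simp [p, hv]

theorem cylinder_mem_span_faceCylinder (C : SComplex V) {S : Finset V} {k : V → ℕ}
    (hS : S ∈ C.faces) (hk : ∀ v ∈ S, k v < d v) :
    cylinder d S k ∈ span ℚ (Set.range (C.faceCylinder d)) := by
  rcases isEmpty_or_nonempty ((v : V) → Fin (d v)) with hempty | ⟨⟨i₀⟩⟩
  · rw [Subsingleton.elim (cylinder d S k) 0]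
    exact zero_mem _
  induction hn : #(S.filter (k · = 0)) using Nat.strong_induction_on generalizing S k with
  | _ n ih =>
  obtain hnone | ⟨a, ha⟩ := (S.filter (k · = 0)).eq_empty_or_nonempty
  · obtain ⟨p, hp⟩ := C.exists_faceCylinder_eq_cylinder i₀ hS hk fun v hv h0 =>
      (eq_empty_iff_forall_notMem.mp hnone) v (mem_filter.mpr ⟨hv, h0⟩)
    exact subset_span ⟨p, hp⟩
  obtain ⟨haS, hka⟩ := mem_filter.mp ha
  have hfewer : ∀ {T : Finset V}, T ⊆ (S.filter (k · = 0)).erase a → #T < n := fun hT =>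
    hn ▸ (card_le_card hT).trans_lt (card_erase_lt_of_mem ha)
  rw [cylinder_eq_sub_sum haS hka]
  refine sub_mem (ih _ (hfewer ?_) (C.down_closed S hS _ (erase_subset a S))
    (fun v hv => hk v (mem_of_mem_erase hv)) rfl) (sum_mem fun m hm => ih _ (hfewer ?_) hS ?_ rfl)
  · intro v
    simp only [mem_filter, mem_erase]
    tauto
  · intro v
    simp only [mem_filter, mem_erase, Function.update_apply]
    grind
  · intro v hv
    rw [Function.update_apply]
    split_ifs with hva
    exacts [hva ▸ (mem_Ioo.mp hm).2, hk v hv]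

theorem intRank_le_card_faceTuples (C : SComplex V) :
    intRank (C.designMatrixD d) ≤ Fintype.card (C.FaceTuples d) := by
  rw [intRank, rank_eq_finrank_span_row]
  calc finrank ℚ (span ℚ (Set.range ((C.designMatrixD d).map ((↑·) : ℤ → ℚ))))
      ≤ finrank ℚ (span ℚ (Set.range (C.faceCylinder d))) := by
        refine finrank_mono (span_le.mpr (Set.range_subset_iff.mpr fun r => ?_))
        rw [designMatrixD_map_row]
        refine C.cylinder_mem_span_faceCylinder (C.facets_subset_faces r.1.2) fun v hv => ?_
        rw [dif_pos hv]
        exact (r.2 _).isLt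
    _ ≤ Fintype.card (C.FaceTuples d) := finrank_range_le_card _

theorem intRank_designMatrixD (C : SComplex V) :
    intRank (C.designMatrixD d) = Fintype.card (C.FaceTuples d) :=
  le_antisymm C.intRank_le_card_faceTuples C.card_faceTuples_le_intRank

theorem designMatrixD_tupleRow_tupleCastLE_eq_zero (C : SComplex V) (h : ∀ v, d' v ≤ d v)
    {p : C.FaceTuples d} (hp : ∃ v, d' v ≤ p.1 v) (j : (v : V) → Fin (d' v)) :
    C.designMatrixD d (C.tupleRow p) (tupleCastLE h j) = 0 := by
  obtain ⟨v, hv⟩ := hp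
  have hjv : (j v : ℕ) < p.1 v := (j v).isLt.trans_le hv
  by_contra hne
  have hsupp : v ∈ tupleSupport p.1 := by
    simpa [tupleSupport] using (Nat.zero_le _).trans_lt hjv |>.ne'
  have := congrArg Fin.val (C.eqOn_of_designMatrixD_tupleRow_ne_zero hne v hsupp)
  simp only [tupleCastLE, Fin.val_castLE] at this
  omega

theorem card_faceTuples_eq_add (C : SComplex V) (h : ∀ v, d' v ≤ d v) :
    Fintype.card (C.FaceTuples d) =
      Fintype.card (C.FaceTuples d') + Fintype.card {p : C.FaceTuples d // ∃ v, d' v ≤ p.1 v} := by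
  let e : {p : C.FaceTuples d // ¬∃ v, d' v ≤ p.1 v} ≃ C.FaceTuples d' :=
    { toFun := fun p => ⟨fun v => ⟨p.1.1 v, not_le.mp fun hv => p.2 ⟨v, hv⟩⟩,
        by rw [← tupleSupport_tupleCastLE h]; exact p.1.2⟩
      invFun := fun j => ⟨⟨tupleCastLE h j.1, (tupleSupport_tupleCastLE h j.1).symm ▸ j.2⟩,
        fun ⟨v, hv⟩ => hv.not_gt (j.1 v).isLt⟩
      left_inv := fun _ => rfl
      right_inv := fun _ => rfl }
  rw [← Fintype.card_congr e, Fintype.card_subtype_compl]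
  have := Fintype.card_subtype_le fun p : C.FaceTuples d => ∃ v, d' v ≤ p.1 v
  omega

end SComplex

/-- If `A_{C,d}` is unimodular and `2 ≤ d' ≤ d` componentwise, then `A_{C,d'}` is
unimodular. -/
theorem designMatrixD_unimodular_of_le {n : ℕ} (C : SComplex (Fin n)) (d d' : Fin n → ℕ)
    (hd : ∀ v, 2 ≤ d' v ∧ d' v ≤ d v)
    (hU : IntUnimodular (C.designMatrixD d)) :
    IntUnimodular (C.designMatrixD d') := by
  have hle : ∀ v, d' v ≤ d v := fun v => (hd v).2
  rw [← C.designMatrixD_submatrix_castLE hle]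
  refine hU.submatrix_of_complement (ι := {p : C.FaceTuples d // ∃ v, d' v ≤ p.1 v}) _ _
    (C.tupleRow ∘ Subtype.val) (Subtype.val ∘ Subtype.val)
    (C.det_designMatrixD_submatrix_tupleRow _ Subtype.val_injective)
    (fun p => C.designMatrixD_tupleRow_tupleCastLE_eq_zero hle p.2) ?_
  rw [C.designMatrixD_submatrix_castLE hle, C.intRank_designMatrixD, C.intRank_designMatrixD,
    C.card_faceTuples_eq_add hle]
  -- the two `Fintype` instances on the subtype differ in how `∃ v : Fin n, _` is decided
  convert rfl
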